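/- Let F be a field, c, d ∈ F, and let T : ℤ × ℤ → F be a function with all values nonzero, satisfying for all (m,n) ∈ ℤ² the bilinear lattice system: T_{m+1,n+2}T_{m,n-1} = d·T_{m+1,n+1}T_{m,n} + c·T_{m+1,n}T_{m,n+1}; T_{m,n+2}T_{m+1,n-1} = d·T_{m,n+1}T_{m+1,n} + T_{m+1,n+1}T_{m,n}; T_{m+2,n+1}T_{m,n} = c·T_{m+1,n+1}T_{m+1,n} + T_{m+1,n+2}T_{m+1,n-1}; T_{m+2,n}T_{m,n+1} = T_{m+1,n+1}T_{m+1,n} + T_{m+1,n+2}T_{m+1,n-1}. Define y_{m,n} = T_{m,n-1}T_{m,n+2}/(T_{m,n}T_{m,n+1}) and w_{m,n} = T_{m+1,n+1}T_{m,n}/(T_{m+1,n}T_{m,n+1}). Then for all (m,n), whenever the relevant denominators are nonzero, one has φ̂(y_{m,n}, w_{m,n}) = (y_{m,n+1}, w_{m,n+1}) and ψ̂(y_{m,n}, w_{m,n}) = (y_{m+1,n}, w_{m+1,n}), where φ̂(u₁,u₂) = ((c + d(u₁+1)u₂)/u₁, (c + d·u₂)/(u₁u₂)) and ψ̂(u₁,u₂)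 = (ū₁, (ū₁+c)/(u₂(ū₁+1))) with ū₁ = (d·u₂+c)(u₂+d)/(u₁u₂). -/

import Mathlib

/-- The deformed A₃ map `φ̂(u₁,u₂) = ((c + d(u₁+1)u₂)/u₁, (c + d·u₂)/(u₁u₂))`. -/
noncomputable def phiHat {F : Type*} [Field F] (c d : F) (u : F × F) : F × F :=
  ((c + d * (u.1 + 1) * u.2) / u.1, (c + d * u.2) / (u.1 * u.2))

/-- The QRT map `ψ̂(u₁,u₂) = (ū₁, ū₂)` with `ū₁ = (d·u₂+c)(u₂+d)/(u₁u₂)` and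
`ū₂ = (ū₁+c)/(u₂(ū₁+1))`. -/
noncomputable def psiHat {F : Type*} [Field F] (c d : F) (u : F × F) : F × F :=
  ((d * u.2 + c) * (u.2 + d) / (u.1 * u.2),
    ((d * u.2 + c) * (u.2 + d) / (u.1 * u.2) + c) /
      (u.2 * ((d * u.2 + c) * (u.2 + d) / (u.1 * u.2) + 1)))

/-!
Each bilinear relation says that one of the affine expressions occurring in `φ̂` and `ψ̂`
(`c + d w`, `w + d`, `ū₁ + c`, `ū₁ + 1`, and `c + d w + d y w` via the second relation
shifted in `n`) factors as a ratio of tau values. After these substitutions every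
component of `φ̂(y, w)` and `ψ̂(y, w)` is a ratio of products of tau values, and the
cancellation leaves exactly the shifted `y` and `w`.
-/

section TauFunction

variable {F : Type*} [Field F]

noncomputable def tauY (T : ℤ → ℤ → F) (m n : ℤ) : F :=
  T m (n - 1) * T m (n + 2) / (T m n * T m (n + 1))

noncomputable def tauW (T : ℤ → ℤ → F) (m n : ℤ) : F :=
  T (m + 1) (n + 1) * T m n / (T (m + 1) n * T m (n + 1))

def TauEq₁ (c d : F) (T : ℤ → ℤ → F) : Prop :=
  ∀ m n, T (m + 1) (n + 2) * T m (n - 1) =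
    d * (T (m + 1) (n + 1) * T m n) + c * (T (m + 1) n * T m (n + 1))

def TauEq₂ (d : F) (T : ℤ → ℤ → F) : Prop :=
  ∀ m n, T m (n + 2) * T (m + 1) (n - 1) =
    d * (T m (n + 1) * T (m + 1) n) + T (m + 1) (n + 1) * T m n

def TauEq₃ (c : F) (T : ℤ → ℤ → F) : Prop :=
  ∀ m n, T (m + 2) (n + 1) * T m n =
    c * (T (m + 1) (n + 1) * T (m + 1) n) + T (m + 1) (n + 2) * T (m + 1) (n - 1)

def TauEq₄ (T : ℤ → ℤ → F) : Prop :=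
  ∀ m n, T (m + 2) n * T m (n + 1) =
    T (m + 1) (n + 1) * T (m + 1) n + T (m + 1) (n + 2) * T (m + 1) (n - 1)

lemma psiHat_eq {c d v : F} (u : F × F) (hv : (d * u.2 + c) * (u.2 + d) / (u.1 * u.2) = v) :
    psiHat c d u = (v, (v + c) / (u.2 * (v + 1))) := by
  subst hv; rfl

variable {c d : F} {T : ℤ → ℤ → F}

lemma tauY_mul_tauW (hT : ∀ m n, T m n ≠ 0) (m n : ℤ) :
    tauY T m n * tauW T m n =
      T m (n - 1) * T m (n + 2) * T (m + 1) (n + 1) / (T m (n + 1) ^ 2 * T (m + 1) n) := by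
  simp only [tauY, tauW]
  field_simp [hT]

lemma add_mul_tauW (hT : ∀ m n, T m n ≠ 0) (e₁ : TauEq₁ c d T) (m n : ℤ) :
    c + d * tauW T m n = T (m + 1) (n + 2) * T m (n - 1) / (T (m + 1) n * T m (n + 1)) := by
  rw [tauW, e₁]
  field_simp [hT]
  ring

lemma tauW_add (hT : ∀ m n, T m n ≠ 0) (e₂ : TauEq₂ d T) (m n : ℤ) :
    tauW T m n + d = T m (n + 2) * T (m + 1) (n - 1) / (T (m + 1) n * T m (n + 1)) := by
  rw [tauW, e₂]
  field_simp [hT]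
  ring

lemma tauY_succ_left_add (hT : ∀ m n, T m n ≠ 0) (e₃ : TauEq₃ c T) (m n : ℤ) :
    tauY T (m + 1) n + c = T (m + 2) (n + 1) * T m n / (T (m + 1) n * T (m + 1) (n + 1)) := by
  rw [tauY, e₃]
  field_simp [hT]
  ring

lemma tauY_succ_left_add_one (hT : ∀ m n, T m n ≠ 0) (e₄ : TauEq₄ T) (m n : ℤ) :
    tauY T (m + 1) n + 1 = T (m + 2) n * T m (n + 1) / (T (m + 1) n * T (m + 1) (n + 1)) := by
  rw [tauY, e₄]
  field_simp [hT]
  ring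

lemma add_mul_tauY_add_one_mul_tauW (hT : ∀ m n, T m n ≠ 0) (e₁ : TauEq₁ c d T)
    (e₂ : TauEq₂ d T) (m n : ℤ) :
    c + d * (tauY T m n + 1) * tauW T m n = T m (n - 1) * T m (n + 3) / T m (n + 1) ^ 2 := by
  have e₂' := e₂ m (n + 1)
  rw [show n + 1 - 1 = n by ring, show n + 1 + 1 = n + 2 by ring,
    show n + 1 + 2 = n + 3 by ring] at e₂'
  rw [show c + d * (tauY T m n + 1) * tauW T m n =
      c + d * tauW T m n + d * (tauY T m n * tauW T m n) by ring,
    add_mul_tauW hT e₁, tauY_mul_tauW hT]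
  field_simp [hT]
  linear_combination -e₂'

lemma phiHat_tau (hT : ∀ m n, T m n ≠ 0) (e₁ : TauEq₁ c d T)
    (e₂ : TauEq₂ d T) (m n : ℤ) :
    phiHat c d (tauY T m n, tauW T m n) = (tauY T m (n + 1), tauW T m (n + 1)) := by
  simp only [phiHat, Prod.mk.injEq]
  rw [add_mul_tauY_add_one_mul_tauW hT e₁ e₂, add_mul_tauW hT e₁, tauY_mul_tauW hT]
  simp only [tauY, tauW]
  rw [show n + 1 - 1 = n by ring, show n + 1 + 1 = n + 2 by ring,
    show n + 1 + 2 = n + 3 by ring]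
  constructor <;> field_simp [hT]

lemma psiHat_tau (hT : ∀ m n, T m n ≠ 0) (e₁ : TauEq₁ c d T) (e₂ : TauEq₂ d T)
    (e₃ : TauEq₃ c T) (e₄ : TauEq₄ T) (m n : ℤ) :
    psiHat c d (tauY T m n, tauW T m n) = (tauY T (m + 1) n, tauW T (m + 1) n) := by
  have hū₁ : (d * tauW T m n + c) * (tauW T m n + d) / (tauY T m n * tauW T m n) =
      tauY T (m + 1) n := by
    rw [add_comm _ c, add_mul_tauW hT e₁, tauW_add hT e₂, tauY_mul_tauW hT, tauY]
    field_simp [hT]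
  rw [psiHat_eq _ hū₁, tauY_succ_left_add hT e₃, tauY_succ_left_add_one hT e₄, tauW, tauW,
    show m + 1 + 1 = m + 2 by ring]
  field_simp [hT]

end TauFunction

theorem lattice_tau_functions_give_commuting_orbits {F : Type*} [Field F]
    (c d : F) (T : ℤ → ℤ → F) (hT : ∀ m n, T m n ≠ 0)
    (e₁ : ∀ m n, T (m + 1) (n + 2) * T m (n - 1) =
      d * (T (m + 1) (n + 1) * T m n) + c * (T (m + 1) n * T m (n + 1)))
    (e₂ : ∀ m n, T m (n + 2) * T (m + 1) (n - 1) =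
      d * (T m (n + 1) * T (m + 1) n) + T (m + 1) (n + 1) * T m n)
    (e₃ : ∀ m n, T (m + 2) (n + 1) * T m n =
      c * (T (m + 1) (n + 1) * T (m + 1) n) + T (m + 1) (n + 2) * T (m + 1) (n - 1))
    (e₄ : ∀ m n, T (m + 2) n * T m (n + 1) =
      T (m + 1) (n + 1) * T (m + 1) n + T (m + 1) (n + 2) * T (m + 1) (n - 1))
    (y w : ℤ → ℤ → F)
    (hy : ∀ m n, y m n = T m (n - 1) * T m (n + 2) / (T m n * T m (n + 1)))
    (hw : ∀ m n, w m n = T (m + 1) (n + 1) * T m n / (T (m + 1) n * T m (n + 1))) :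
    ∀ m n : ℤ,
      phiHat c d (y m n, w m n) = (y m (n + 1), w m (n + 1)) ∧
      ((d * w m n + c) * (w m n + d) / (y m n * w m n) + 1 ≠ 0 →
        psiHat c d (y m n, w m n) = (y (m + 1) n, w (m + 1) n)) := by
  obtain rfl : y = tauY T := funext₂ hy
  obtain rfl : w = tauW T := funext₂ hw
  exact fun m n => ⟨phiHat_tau hT e₁ e₂ m n, fun _ => psiHat_tau hT e₁ e₂ e₃ e₄ m n⟩
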